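/- If a convex body K in the plane is covered by two planks, then the sum of their widths relative to K is at least 1. -/

import Mathlib

/-!
Let `A, B` minimize and maximize `f = ⟪·, u₁⟫` on `K`, and `C, D` do the same for `g = ⟪·, u₂⟫`;
shrink the planks to their traces `[a, b]`, `[c, d]` on the ranges of `f` and `g`. The segment
`AC` lies in `K`, and along it the points with `f < a` and those with `g < c` form two parameter
intervals which must be disjoint; this gives the corner inequality
`(a - f A) (c - g C) ≤ (f C - a) (g A - c)`, with both right-hand factors clamped to the planks.
The same holds at the corners `BC`, `AD`, `BD`. The clamped factors split the plank widths
`p = b - a`, `q = d - c`, and combining the four corner inequalities by AM-GM yields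
`(W₁ - p) (W₂ - q) ≤ p q` for the widths `W₁, W₂` of `K`, i.e. `W₁ W₂ ≤ p W₂ + q W₁`.
-/

/-- A plank (strip) of width `w` in direction of the unit vector `u`. -/
def plank (u : EuclideanSpace ℝ (Fin 2)) (a w : ℝ) : Set (EuclideanSpace ℝ (Fin 2)) :=
  {x | a ≤ (inner ℝ x u : ℝ) ∧ (inner ℝ x u : ℝ) ≤ a + w}

/-- The width of a set `K` in direction `u`. -/
noncomputable def dirWidth (K : Set (EuclideanSpace ℝ (Fin 2)))
    (u : EuclideanSpace ℝ (Fin 2)) : ℝ :=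
  sSup ((fun x => (inner ℝ x u : ℝ)) '' K) - sInf ((fun x => (inner ℝ x u : ℝ)) '' K)

open Set

theorem sub_mul_sub_le_of_segment_covered {F₀ F₁ G₀ G₁ a b c d : ℝ} (hF₀ : F₀ ≤ a)
    (hG₁ : G₁ ≤ c)
    (hcov : ∀ t ∈ Icc (0 : ℝ) 1,
      (1 - t) * F₀ + t * F₁ ∈ Icc a b ∨ (1 - t) * G₀ + t * G₁ ∈ Icc c d) :
    (a - F₀) * (c - G₁) ≤ max (min F₁ b - a) 0 * max (min G₀ d - c) 0 := by
  have hrhs : 0 ≤ max (min F₁ b - a) 0 * max (min G₀ d - c) 0 :=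
    mul_nonneg (le_max_right _ _) (le_max_right _ _)
  rcases hF₀.eq_or_lt with rfl | hF₀
  · rwa [sub_self, zero_mul]
  rcases hG₁.eq_or_lt with rfl | hG₁
  · rwa [sub_self, mul_zero]
  obtain ⟨hcG₀, hG₀d⟩ : G₀ ∈ Icc c d := by
    simpa [hF₀.not_ge] using hcov 0 (left_mem_Icc.2 zero_le_one)
  obtain ⟨haF₁, hF₁b⟩ : F₁ ∈ Icc a b := by
    simpa [hG₁.not_ge] using hcov 1 (right_mem_Icc.2 zero_le_one)
  rw [min_eq_left hF₁b, min_eq_left hG₀d, max_eq_left (sub_nonneg.2 haF₁),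
    max_eq_left (sub_nonneg.2 hcG₀)]
  by_contra! h
  -- At the mediant `t` of the two uncovered parameter intervals both `F < a` and `G < c`.
  set S := (a - F₀) + (F₁ - a) + (c - G₁) + (G₀ - c)
  have hS : 0 < S := by linarith
  set t := ((a - F₀) + (G₀ - c)) / S with ht
  have hF :
      ((1 - t) * F₀ + t * F₁ - a) * S = (F₁ - a) * (G₀ - c) - (a - F₀) * (c - G₁) := by
    rw [ht]; field_simp; ring
  have hG :
      ((1 - t) * G₀ + t * G₁ - c) * S = (F₁ - a) * (G₀ - c) - (a - F₀) * (c - G₁) := by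
    rw [ht]; field_simp; ring
  have ht₀ : 0 ≤ t := by positivity
  have ht₁ : t ≤ 1 := (div_le_one hS).2 (by linarith)
  rcases hcov t ⟨ht₀, ht₁⟩ with ⟨h', -⟩ | ⟨h', -⟩
  · nlinarith [mul_nonneg (sub_nonneg.2 h') hS.le]
  · nlinarith [mul_nonneg (sub_nonneg.2 h') hS.le]

theorem exists_Icc_subset_inter {m M a w : ℝ} (hmM : m ≤ M) (hw : 0 ≤ w) :
    ∃ a' b', m ≤ a' ∧ a' ≤ b' ∧ b' ≤ M ∧ b' - a' ≤ w ∧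
      Icc m M ∩ Icc a (a + w) ⊆ Icc a' b' := by
  rw [Icc_inter_Icc]
  by_cases h : max m a ≤ min M (a + w)
  · exact ⟨_, _, le_max_left _ _, h, min_le_left _ _,
      by linarith [le_max_right m a, min_le_right M (a + w)], subset_rfl⟩
  · exact ⟨m, m, le_rfl, le_rfl, hmM, by simpa using hw, by simp [Icc_eq_empty h]⟩

theorem mul_add_sq_le_of_mul_le {P R₁ R₂ x y s₁ s₂ : ℝ} (hP : 0 ≤ P) (hR₁ : 0 ≤ R₁)
    (hR₂ : 0 ≤ R₂) (hx : 0 ≤ x) (hy : 0 ≤ y) (hs₁ : 0 ≤ s₁) (hs₂ : 0 ≤ s₂)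
    (h₁ : P * R₁ ≤ x * s₁) (h₂ : P * R₂ ≤ y * s₂) :
    P * (R₁ + R₂) ^ 2 ≤ (s₁ + s₂) * (x * R₁ + y * R₂) := by
  have hprod : (P * R₁ * R₂) ^ 2 ≤ (s₂ * x * R₁) * (s₁ * y * R₂) := by
    have := mul_le_mul h₁ h₂ (by positivity) (by positivity)
    nlinarith [mul_le_mul_of_nonneg_right this (mul_nonneg hR₁ hR₂)]
  have hcross : 2 * (P * R₁ * R₂) ≤ s₂ * x * R₁ + s₁ * y * R₂ := by
    nlinarith [sq_nonneg (s₂ * x * R₁ - s₁ * y * R₂), mul_nonneg (mul_nonneg hP hR₁) hR₂,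
      mul_nonneg (mul_nonneg hs₂ hx) hR₁, mul_nonneg (mul_nonneg hs₁ hy) hR₂]
  nlinarith [mul_le_mul_of_nonneg_right h₁ hR₁, mul_le_mul_of_nonneg_right h₂ hR₂]

theorem add_mul_add_le_of_corner_bounds {P₁ P₂ R₁ R₂ x₁ x₂ y₁ y₂ s₁ s₂ t₁ t₂ p q : ℝ}
    (hP₁ : 0 ≤ P₁) (hP₂ : 0 ≤ P₂) (hR₁ : 0 ≤ R₁) (hR₂ : 0 ≤ R₂)
    (hx₁ : 0 ≤ x₁) (hx₂ : 0 ≤ x₂) (hy₁ : 0 ≤ y₁) (hy₂ : 0 ≤ y₂)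
    (hs₁ : 0 ≤ s₁) (hs₂ : 0 ≤ s₂) (ht₁ : 0 ≤ t₁) (ht₂ : 0 ≤ t₂)
    (hx : x₁ + x₂ = p) (hy : y₁ + y₂ = p) (hs : s₁ + s₂ = q) (ht : t₁ + t₂ = q)
    (h₁₁ : P₁ * R₁ ≤ x₁ * s₁) (h₂₁ : P₂ * R₁ ≤ x₂ * t₁)
    (h₁₂ : P₁ * R₂ ≤ y₁ * s₂) (h₂₂ : P₂ * R₂ ≤ y₂ * t₂) :
    (P₁ + P₂) * (R₁ + R₂) ≤ p * q := by
  have hsum : (P₁ + P₂) * (R₁ + R₂) * (R₁ + R₂) ≤ p * q * (R₁ + R₂) :=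
    calc (P₁ + P₂) * (R₁ + R₂) * (R₁ + R₂)
        = P₁ * (R₁ + R₂) ^ 2 + P₂ * (R₁ + R₂) ^ 2 := by ring
      _ ≤ (s₁ + s₂) * (x₁ * R₁ + y₁ * R₂) + (t₁ + t₂) * (x₂ * R₁ + y₂ * R₂) :=
        add_le_add (mul_add_sq_le_of_mul_le hP₁ hR₁ hR₂ hx₁ hy₁ hs₁ hs₂ h₁₁ h₁₂)
          (mul_add_sq_le_of_mul_le hP₂ hR₁ hR₂ hx₂ hy₂ ht₁ ht₂ h₂₁ h₂₂)
      _ = p * q * (R₁ + R₂) := by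
        linear_combination (x₁ * R₁ + y₁ * R₂) * hs + (x₂ * R₁ + y₂ * R₂) * ht + q * R₁ * hx +
          q * R₂ * hy
  rcases (add_nonneg hR₁ hR₂).eq_or_lt with hR | hR
  · rw [← hR, mul_zero, ← hx, ← hs]
    positivity
  · exact le_of_mul_le_mul_right hsum hR

section Convex

variable {E : Type*} [AddCommGroup E] [Module ℝ E] {K : Set E}

theorem Convex.sub_mul_sub_le {f g : E →ₗ[ℝ] ℝ} {a b c d : ℝ} (hK : Convex ℝ K)
    (hcov : ∀ x ∈ K, f x ∈ Icc a b ∨ g x ∈ Icc c d) {X Y : E} (hX : X ∈ K) (hY : Y ∈ K)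
    (hfX : f X ≤ a) (hgY : g Y ≤ c) :
    (a - f X) * (c - g Y) ≤ max (min (f Y) b - a) 0 * max (min (g X) d - c) 0 :=
  sub_mul_sub_le_of_segment_covered hfX hgY fun t ⟨ht₀, ht₁⟩ => by
    simpa using hcov _ (hK hX hY (sub_nonneg.2 ht₁) ht₀ (sub_add_cancel 1 t))

theorem Convex.sub_add_sub_mul_le {f g : E →ₗ[ℝ] ℝ} {a b c d : ℝ} (hK : Convex ℝ K)
    (hab : a ≤ b) (hcd : c ≤ d) (hcov : ∀ x ∈ K, f x ∈ Icc a b ∨ g x ∈ Icc c d)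
    {A B C D : E} (hA : A ∈ K) (hB : B ∈ K) (hC : C ∈ K) (hD : D ∈ K)
    (hfA : f A ≤ a) (hfB : b ≤ f B) (hgC : g C ≤ c) (hgD : d ≤ g D) :
    (a - f A + (f B - b)) * (c - g C + (g D - d)) ≤ (b - a) * (d - c) := by
  have hcov' : ∀ x ∈ K, (-f) x ∈ Icc (-b) (-a) ∨ g x ∈ Icc c d := by
    simpa only [LinearMap.neg_apply, neg_mem_Icc_iff, neg_neg] using hcov
  have hcov'' : ∀ x ∈ K, f x ∈ Icc a b ∨ (-g) x ∈ Icc (-d) (-c) := by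
    simpa only [LinearMap.neg_apply, neg_mem_Icc_iff, neg_neg] using hcov
  have hcov''' : ∀ x ∈ K, (-f) x ∈ Icc (-b) (-a) ∨ (-g) x ∈ Icc (-d) (-c) := by
    simpa only [LinearMap.neg_apply, neg_mem_Icc_iff, neg_neg] using hcov
  -- The corners at `B` and `D` are the corner at `A`, `C` for `-f` and `-g`.
  have hAC := hK.sub_mul_sub_le hcov hA hC hfA hgC
  have hBC := hK.sub_mul_sub_le hcov' hB hC (by simpa using hfB) hgC
  have hAD := hK.sub_mul_sub_le hcov'' hA hD hfA (by simpa using hgD)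
  have hBD := hK.sub_mul_sub_le hcov''' hB hD (by simpa using hfB) (by simpa using hgD)
  simp only [LinearMap.neg_apply, min_neg_neg, neg_sub_neg] at hBC hAD hBD
  have hsplit (z a b : ℝ) (hab : a ≤ b) :
      max (min z b - a) 0 + max (b - max z a) 0 = b - a := by
    simp only [min_def, max_def]
    split_ifs <;> linarith
  exact add_mul_add_le_of_corner_bounds (sub_nonneg.2 hfA) (sub_nonneg.2 hfB)
    (sub_nonneg.2 hgC) (sub_nonneg.2 hgD) (le_max_right _ _) (le_max_right _ _)
    (le_max_right _ _) (le_max_right _ _) (le_max_right _ _) (le_max_right _ _)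
    (le_max_right _ _) (le_max_right _ _) (hsplit _ _ _ hab) (hsplit _ _ _ hab)
    (hsplit _ _ _ hcd) (hsplit _ _ _ hcd) hAC hBC hAD hBD

theorem Convex.one_le_div_add_div {f g : E →ₗ[ℝ] ℝ} (hK : Convex ℝ K) {A B C D : E}
    (hA : A ∈ K) (hB : B ∈ K) (hC : C ∈ K) (hD : D ∈ K) (hAmin : IsMinOn f K A)
    (hBmax : IsMaxOn f K B) (hCmin : IsMinOn g K C) (hDmax : IsMaxOn g K D)
    (hAB : f A < f B) (hCD : g C < g D) {a₁ a₂ w₁ w₂ : ℝ} (hw₁ : 0 ≤ w₁) (hw₂ : 0 ≤ w₂)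
    (hcov : ∀ x ∈ K, f x ∈ Icc a₁ (a₁ + w₁) ∨ g x ∈ Icc a₂ (a₂ + w₂)) :
    1 ≤ w₁ / (f B - f A) + w₂ / (g D - g C) := by
  obtain ⟨a, b, hAa, hab, hbB, hba, hsub₁⟩ := exists_Icc_subset_inter (a := a₁) hAB.le hw₁
  obtain ⟨c, d, hCc, hcd, hdD, hdc, hsub₂⟩ := exists_Icc_subset_inter (a := a₂) hCD.le hw₂
  have hcov' : ∀ x ∈ K, f x ∈ Icc a b ∨ g x ∈ Icc c d := fun x hx =>
    (hcov x hx).imp (fun h => hsub₁ ⟨⟨hAmin hx, hBmax hx⟩, h⟩)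
      (fun h => hsub₂ ⟨⟨hCmin hx, hDmax hx⟩, h⟩)
  have key := hK.sub_add_sub_mul_le hab hcd hcov' hA hB hC hD hAa hbB hCc hdD
  have hW₁ := sub_pos.2 hAB
  have hW₂ := sub_pos.2 hCD
  rw [div_add_div _ _ hW₁.ne' hW₂.ne', one_le_div (mul_pos hW₁ hW₂)]
  nlinarith [mul_le_mul_of_nonneg_right hba hW₂.le, mul_le_mul_of_nonneg_left hdc hW₁.le]

end Convex

theorem StrongDual.lt_of_isMinOn_of_isMaxOn {E : Type*} [NormedAddCommGroup E]
    [NormedSpace ℝ E] {K : Set E} (hK : (interior K).Nonempty) {f : StrongDual ℝ E}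
    (hf : f ≠ 0) {A B : E} (hA : IsMinOn f K A) (hB : IsMaxOn f K B) : f A < f B := by
  by_contra! hBA
  have himage : f '' interior K = {f A} :=
    (hK.image f).subset_singleton_iff.1 <| image_subset_iff.2 fun x hx =>
      le_antisymm ((hB (interior_subset hx)).trans hBA) (hA (interior_subset hx))
  exact not_isOpen_singleton (f A) (himage ▸ f.isOpenMap_of_ne_zero hf _ isOpen_interior)

theorem mem_plank_iff {u x : EuclideanSpace ℝ (Fin 2)} {a w : ℝ} :
    x ∈ plank u a w ↔ innerSL ℝ u x ∈ Icc a (a + w) := by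
  simp [plank, real_inner_comm]

theorem exists_dirWidth_eq {K : Set (EuclideanSpace ℝ (Fin 2))} (hK : IsCompact K)
    (hne : K.Nonempty) (u : EuclideanSpace ℝ (Fin 2)) :
    ∃ A ∈ K, ∃ B ∈ K, IsMinOn (innerSL ℝ u) K A ∧ IsMaxOn (innerSL ℝ u) K B ∧
      dirWidth K u = innerSL ℝ u B - innerSL ℝ u A := by
  obtain ⟨A, hA, hinf, hAmin⟩ :=
    hK.exists_sInf_image_eq_and_le hne (innerSL ℝ u).continuous.continuousOn
  obtain ⟨B, hB, hsup, hBmax⟩ :=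
    hK.exists_sSup_image_eq_and_ge hne (innerSL ℝ u).continuous.continuousOn
  have hinner : (fun x => inner ℝ x u) = innerSL ℝ u := funext fun x => real_inner_comm u x
  exact ⟨A, hA, B, hB, isMinOn_iff.2 hAmin, isMaxOn_iff.2 hBmax,
    by rw [dirWidth, hinner, hsup, hinf]⟩

/-- The two-plank case of Bang's affine plank problem: if a planar convex body
is covered by two planks, the sum of their widths relative to the body is at
least `1`. -/
theorem bang_two_planks_relative (K : Set (EuclideanSpace ℝ (Fin 2)))
    (hK : IsCompact K) (hKc : Convex ℝ K) (hKi : (interior K).Nonempty)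
    (u₁ u₂ : EuclideanSpace ℝ (Fin 2)) (a₁ a₂ w₁ w₂ : ℝ)
    (hu₁ : ‖u₁‖ = 1) (hu₂ : ‖u₂‖ = 1) (hw₁ : 0 ≤ w₁) (hw₂ : 0 ≤ w₂)
    (hcov : K ⊆ plank u₁ a₁ w₁ ∪ plank u₂ a₂ w₂) :
    1 ≤ w₁ / dirWidth K u₁ + w₂ / dirWidth K u₂ := by
  have hne : K.Nonempty := hKi.mono interior_subset
  have hf₁ : innerSL ℝ u₁ ≠ 0 := by
    rw [← norm_ne_zero_iff, innerSL_apply_norm, hu₁]; exact one_ne_zero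
  have hf₂ : innerSL ℝ u₂ ≠ 0 := by
    rw [← norm_ne_zero_iff, innerSL_apply_norm, hu₂]; exact one_ne_zero
  obtain ⟨A, hA, B, hB, hAmin, hBmax, hW₁⟩ := exists_dirWidth_eq hK hne u₁
  obtain ⟨C, hC, D, hD, hCmin, hDmax, hW₂⟩ := exists_dirWidth_eq hK hne u₂
  rw [hW₁, hW₂]
  exact hKc.one_le_div_add_div (f := innerSL ℝ u₁) (g := innerSL ℝ u₂) hA hB hC hD
    hAmin hBmax hCmin hDmax (StrongDual.lt_of_isMinOn_of_isMaxOn hKi hf₁ hAmin hBmax)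
    (StrongDual.lt_of_isMinOn_of_isMaxOn hKi hf₂ hCmin hDmax) hw₁ hw₂
    fun x hx => by simpa only [mem_union, mem_plank_iff, ContinuousLinearMap.coe_coe] using hcov hx
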